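/- arXiv:2511.07601 — 2 statements merged into one kernel-verified Lean document; each statement's English description precedes it below -/
import Mathlib

section
/- Let p_ℓ = (3/64) · Σ_{k≥0} (3/4)^k · Σ_{m≥0} 4^{−m}(4·Cat(m) − Cat(m+1)). Then p_ℓ = 3/4. -/
open Filter Finset

noncomputable def aSeq (m : ℕ) : ℝ := 4 * catalan m / 4 ^ m

lemma centralBinom_le_four_pow (m : ℕ) : m.centralBinom ≤ 4 ^ m := by
  have h : (2 * m).choose m ≤ ∑ i ∈ range (2 * m + 1), (2 * m).choose i :=
    Finset.single_le_sum (f := fun i => (2 * m).choose i) (fun i _ => Nat.zero_le _)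
      (by simp [Nat.lt_succ_iff]; omega)
  calc m.centralBinom = (2 * m).choose m := rfl
    _ ≤ 2 ^ (2 * m) := by rw [← Nat.sum_range_choose]; exact h
    _ = 4 ^ m := by rw [pow_mul]; norm_num

lemma catalan_le (m : ℕ) : ((m : ℝ) + 1) * catalan m ≤ 4 ^ m := by
  have := succ_mul_catalan_eq_centralBinom m
  have h := centralBinom_le_four_pow m
  have : ((m + 1) * catalan m : ℕ) ≤ 4 ^ m := this ▸ h
  exact_mod_cast this

lemma aSeq_tendsto : Tendsto aSeq atTop (nhds 0) := by
  have h1 : Tendsto (fun m : ℕ => 4 / ((m : ℝ) + 1)) atTop (nhds 0) := by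
    apply Tendsto.div_atTop tendsto_const_nhds
    exact tendsto_atTop_add_const_right _ 1 tendsto_natCast_atTop_atTop
  apply squeeze_zero (fun m => by unfold aSeq; positivity) _ h1
  intro m
  rw [aSeq, div_le_div_iff₀ (by positivity) (by positivity)]
  have h := catalan_le m
  nlinarith [pow_pos (show (0:ℝ) < 4 by norm_num) m, (show (0:ℝ) ≤ (catalan m : ℝ) by positivity)]

lemma catalan_succ_le (m : ℕ) : (catalan (m + 1) : ℝ) ≤ 4 * catalan m := by
  have h1 := succ_mul_catalan_eq_centralBinom m
  have h2 := succ_mul_catalan_eq_centralBinom (m + 1)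
  have h3 := Nat.succ_mul_centralBinom_succ m
  have h1' : ((m : ℝ) + 1) * catalan m = m.centralBinom := by exact_mod_cast h1
  have h2' : ((m : ℝ) + 2) * catalan (m + 1) = (m + 1).centralBinom := by
    push_cast [← h2]; ring
  have h3' : ((m : ℝ) + 1) * (m + 1).centralBinom = 2 * (2 * m + 1) * m.centralBinom := by
    exact_mod_cast h3
  have hc : (0 : ℝ) ≤ (catalan m : ℝ) := by positivity
  have hm : (0 : ℝ) ≤ (m : ℝ) := Nat.cast_nonneg m
  have key : ((m : ℝ) + 1) * (((m : ℝ) + 2) * catalan (m + 1))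
      ≤ ((m : ℝ) + 1) * (((m : ℝ) + 2) * (4 * catalan m)) := by
    rw [h2', h3', ← h1']
    nlinarith
  have := le_of_mul_le_mul_left key (by positivity : (0:ℝ) < (m : ℝ) + 1)
  exact le_of_mul_le_mul_left this (by positivity : (0:ℝ) < (m : ℝ) + 2)

lemma inner_hasSum :
    HasSum (fun m : ℕ => (4 : ℝ) ^ (-(m : ℤ)) * (4 * catalan m - catalan (m + 1))) 4 := by
  have heq : ∀ m : ℕ, (4 : ℝ) ^ (-(m : ℤ)) * (4 * catalan m - catalan (m + 1))
      = aSeq m - aSeq (m + 1) := by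
    intro m
    rw [zpow_neg, zpow_natCast, aSeq, aSeq]
    field_simp
    ring
  simp_rw [heq]
  have hnn : ∀ m : ℕ, (0 : ℝ) ≤ aSeq m - aSeq (m + 1) := by
    intro m
    have := catalan_succ_le m
    rw [aSeq, aSeq, sub_nonneg, div_le_div_iff₀ (by positivity) (by positivity)]
    have h4 : (4 : ℝ) ^ (m + 1) = 4 * 4 ^ m := by ring
    nlinarith [pow_pos (show (0:ℝ) < 4 by norm_num) m]
  rw [hasSum_iff_tendsto_nat_of_nonneg hnn]
  have : ∀ n : ℕ, ∑ i ∈ range n, (aSeq i - aSeq (i + 1)) = aSeq 0 - aSeq n := by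
    intro n; exact Finset.sum_range_sub' aSeq n
  simp_rw [this]
  have h0 : aSeq 0 = 4 := by simp [aSeq]
  rw [h0]
  have := aSeq_tendsto
  have := (tendsto_const_nhds (x := (4:ℝ)) (f := atTop)).sub this
  simpa using this

/-- `p_ℓ = (3/64) · Σ_{k≥0} (3/4)^k · Σ_{m≥0} 4^{−m}(4·Cat(m) − Cat(m+1)) = 3/4`,
the total probability that a step of the Schnyder peeling process on the UIHPT is a left step. -/
theorem stmt_7 :
    (3 / 64 : ℝ) * ∑' k : ℕ, (3 / 4 : ℝ) ^ k *
        ∑' m : ℕ, (4 : ℝ) ^ (-(m : ℤ)) * (4 * catalan m - catalan (m + 1))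
      = 3 / 4 := by
  rw [inner_hasSum.tsum_eq, tsum_mul_right,
    tsum_geometric_of_lt_one (by norm_num) (by norm_num)]
  norm_num
end

section
/- Let p_r = (3/64) · Σ_{k≥0} (3/4)^k · Σ_{m≥k} 4^{−m}(4·Cat(m) − Cat(m+1)). Then p_r = 1/4. -/
/-!
With `g m = 4 Cat(m) / 4^m`, the terms of the inner sum are `g m - g (m + 1)`, and `g` is summable
(it is the Catalan series at `x = 1/4`), so the inner sum telescopes to `g k`. The outer sum then
becomes `4 Σ Cat(k) (3/16)^k = 4 c(3/16) = 16/3`.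

The generating function needs no analysis of `c`: the recursion `Cat(n+1) = Σ Cat(i) Cat(n-i)`
gives `S_{N+1} ≤ 1 + x S_N²` for the partial sums, so `S_N ≤ c(x)` by induction, as `c(x)` is the
smaller fixed point of `t ↦ 1 + x t²`. Hence the series converges, and by the Cauchy product its
sum is also a fixed point, which can only be `c(x)`.
-/

open Finset

lemma catalan_succ_eq_sum_range (n : ℕ) :
    catalan (n + 1) = ∑ k ∈ range (n + 1), catalan k * catalan (n - k) := by
  rw [catalan_succ, Fin.sum_univ_eq_sum_range (fun k => catalan k * catalan (n - k))]

lemma catalan_succ_mul_pow_succ {R : Type*} [CommSemiring R] (x : R) (n : ℕ) :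
    (catalan (n + 1) : R) * x ^ (n + 1) =
      x * ∑ k ∈ range (n + 1), (catalan k * x ^ k) * (catalan (n - k) * x ^ (n - k)) := by
  rw [catalan_succ_eq_sum_range, Nat.cast_sum, sum_mul, mul_sum]
  refine sum_congr rfl fun k hk => ?_
  have hkn : k + (n - k) = n := Nat.add_sub_cancel' (Nat.lt_succ_iff.mp (mem_range.mp hk))
  rw [Nat.cast_mul, show x ^ (n + 1) = x * (x ^ k * x ^ (n - k)) by
    rw [← pow_add, hkn, pow_succ, mul_comm]]
  ring

/-- `c(x)`, as long as `0 < x ≤ 1/4`; at `x = 0` division by zero gives `0` rather than `c(0) = 1`. -/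
noncomputable def catalanGF (x : ℝ) : ℝ := (1 - √(1 - 4 * x)) / (2 * x)

section catalanGF

variable {x : ℝ}

lemma one_add_mul_catalanGF_sq (hx0 : 0 < x) (hx : x ≤ 1 / 4) :
    1 + x * catalanGF x ^ 2 = catalanGF x := by
  have hsq := Real.sq_sqrt (show 0 ≤ 1 - 4 * x by linarith)
  unfold catalanGF
  generalize √(1 - 4 * x) = s at hsq
  field_simp
  linear_combination hsq

lemma catalanGF_nonneg (hx0 : 0 < x) : 0 ≤ catalanGF x := by
  have : √(1 - 4 * x) ≤ 1 := Real.sqrt_le_one.mpr (by linarith)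
  unfold catalanGF
  exact div_nonneg (by linarith) (by linarith)

lemma two_mul_mul_catalanGF_le_one (hx0 : 0 < x) : 2 * x * catalanGF x ≤ 1 := by
  unfold catalanGF
  rw [mul_div_cancel₀ _ (by positivity)]
  linarith [Real.sqrt_nonneg (1 - 4 * x)]

lemma sum_range_catalan_mul_pow_succ_le (hx : 0 ≤ x) (N : ℕ) :
    ∑ n ∈ range (N + 1), (catalan n : ℝ) * x ^ n ≤
      1 + x * (∑ n ∈ range N, (catalan n : ℝ) * x ^ n) ^ 2 := by
  set a : ℕ → ℝ := fun n => catalan n * x ^ n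
  have ha : ∀ n, 0 ≤ a n := fun n => by positivity
  have hdiag : ∑ n ∈ range N, ∑ k ∈ range (n + 1), a k * a (n - k) ≤ (∑ n ∈ range N, a n) ^ 2 := by
    rw [sum_range_diag_flip N fun k l => a k * a l, sq, sum_mul_sum]
    exact sum_le_sum fun m _ => sum_le_sum_of_subset_of_nonneg (range_mono (Nat.sub_le N m))
      fun k _ _ => mul_nonneg (ha m) (ha k)
  calc ∑ n ∈ range (N + 1), a n = ∑ n ∈ range N, a (n + 1) + 1 := by
        simp [sum_range_succ', a]
    _ = x * ∑ n ∈ range N, ∑ k ∈ range (n + 1), a k * a (n - k) + 1 := by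
        simp only [a, catalan_succ_mul_pow_succ, mul_sum]
    _ ≤ 1 + x * (∑ n ∈ range N, a n) ^ 2 := by nlinarith [mul_le_mul_of_nonneg_left hdiag hx]

lemma sum_range_catalan_mul_pow_le_catalanGF (hx0 : 0 < x) (hx : x ≤ 1 / 4) (N : ℕ) :
    ∑ n ∈ range N, (catalan n : ℝ) * x ^ n ≤ catalanGF x := by
  induction N with
  | zero => simpa using catalanGF_nonneg hx0
  | succ N ih =>
    have hpos : 0 ≤ ∑ n ∈ range N, (catalan n : ℝ) * x ^ n := by positivity
    calc _ ≤ 1 + x * (∑ n ∈ range N, (catalan n : ℝ) * x ^ n) ^ 2 :=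
          sum_range_catalan_mul_pow_succ_le hx0.le N
      _ ≤ 1 + x * catalanGF x ^ 2 := by gcongr
      _ = catalanGF x := one_add_mul_catalanGF_sq hx0 hx

lemma tsum_catalan_mul_pow_eq (hs : Summable fun n => (catalan n : ℝ) * x ^ n) :
    ∑' n, (catalan n : ℝ) * x ^ n = 1 + x * (∑' n, (catalan n : ℝ) * x ^ n) ^ 2 := by
  have hnorm : Summable fun n => ‖(catalan n : ℝ) * x ^ n‖ := by
    simpa only [Real.norm_eq_abs] using hs.abs
  rw [sq, tsum_mul_tsum_eq_tsum_sum_range_of_summable_norm hnorm hnorm, ← tsum_mul_left,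
    hs.tsum_eq_zero_add]
  simp [catalan_succ_mul_pow_succ]

theorem hasSum_catalan_mul_pow (hx0 : 0 < x) (hx : x ≤ 1 / 4) :
    HasSum (fun n => (catalan n : ℝ) * x ^ n) (catalanGF x) := by
  have hnonneg : ∀ n, 0 ≤ (catalan n : ℝ) * x ^ n := fun n => by positivity
  have hs := summable_of_sum_range_le hnonneg (sum_range_catalan_mul_pow_le_catalanGF hx0 hx)
  have hle := Real.tsum_le_of_sum_range_le hnonneg (sum_range_catalan_mul_pow_le_catalanGF hx0 hx)
  have hS := tsum_catalan_mul_pow_eq hs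
  have hc := one_add_mul_catalanGF_sq hx0 hx
  have hc2 := two_mul_mul_catalanGF_le_one hx0
  convert hs.hasSum using 1
  set S := ∑' n, (catalan n : ℝ) * x ^ n
  have hroots : (catalanGF x - S) * (1 - x * (catalanGF x + S)) = 0 := by
    linear_combination -hS - hc
  rcases mul_eq_zero.mp hroots with h | h
  · linarith
  · nlinarith

end catalanGF

lemma hasSum_sub_succ {G : Type*} [AddCommGroup G] [TopologicalSpace G] [IsTopologicalAddGroup G]
    [T2Space G] {f : ℕ → G} (hf : Summable f) : HasSum (fun n => f n - f (n + 1)) (f 0) := by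
  convert hf.hasSum.sub ((summable_nat_add_iff 1).mpr hf).hasSum using 1
  rw [hf.tsum_eq_zero_add]
  abel

lemma hasSum_four_zpow_neg_mul_catalan_tail (k : ℕ) :
    HasSum (fun j => (4 : ℝ) ^ (-((k + j : ℕ) : ℤ)) * (4 * catalan (k + j) - catalan (k + j + 1)))
      (4 * (catalan k * (1 / 4) ^ k)) := by
  have hg : Summable fun m => 4 * ((catalan m : ℝ) * (1 / 4) ^ m) :=
    (hasSum_catalan_mul_pow (by norm_num) le_rfl).summable.mul_left 4
  have hgk : Summable fun j => 4 * ((catalan (k + j) : ℝ) * (1 / 4) ^ (k + j)) := by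
    simpa only [add_comm _ k] using (summable_nat_add_iff k).mpr hg
  have htelescope := hasSum_sub_succ hgk
  simp only [add_zero] at htelescope
  refine htelescope.congr_fun fun j => ?_
  rw [zpow_neg, zpow_natCast, ← add_assoc, one_div, inv_pow, inv_pow, pow_succ]
  ring

lemma catalanGF_three_div_sixteen : catalanGF (3 / 16) = 4 / 3 := by
  rw [catalanGF, show (1 - 4 * (3 / 16) : ℝ) = (1 / 2) ^ 2 by norm_num,
    Real.sqrt_sq (by norm_num)]
  norm_num

/-- `p_r = (3/64) · Σ_{k≥0} (3/4)^k · Σ_{m≥k} 4^{−m}(4·Cat(m) − Cat(m+1)) = 1/4`,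
the total probability that a step of the Schnyder peeling process on the UIHPT is a right step.
The inner sum over `m ≥ k` is written as a sum over `j = m - k ≥ 0`. -/
theorem stmt_8 :
    (3 / 64 : ℝ) * ∑' k : ℕ, (3 / 4 : ℝ) ^ k *
        ∑' j : ℕ, (4 : ℝ) ^ (-((k + j : ℕ) : ℤ)) * (4 * catalan (k + j) - catalan (k + j + 1))
      = 1 / 4 := by
  simp_rw [fun k => (hasSum_four_zpow_neg_mul_catalan_tail k).tsum_eq]
  have hterm : ∀ k : ℕ, (3 / 4 : ℝ) ^ k * (4 * (catalan k * (1 / 4) ^ k)) =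
      4 * (catalan k * (3 / 16) ^ k) := fun k => by
    rw [show (3 / 16 : ℝ) = 3 / 4 * (1 / 4) by norm_num, mul_pow]
    ring
  simp_rw [hterm]
  rw [tsum_mul_left, (hasSum_catalan_mul_pow (by norm_num) (by norm_num)).tsum_eq,
    catalanGF_three_div_sixteen]
  norm_num
end
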